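/- If Γ ⊢_Σ M : A holds in LF, then the encoded term ⟨M⟩ is well-typed in the simply typed lambda calculus with type φ(A), in the signature/context obtained by flattening the types of all constants and variables via φ. -/

import Mathlib

/- De Bruijn presentation of LF: kinds, types, objects (with meta-variables). -/
mutual
inductive LTy : Type where
  | const : Nat → LTy
  | pi : LTy → LTy → LTy
  | app : LTy → LObj → LTy
inductive LObj : Type where
  | const : Nat → LObj
  | var : Nat → LObj
  | mvar : Nat → LObj
  | app : LObj → LObj → LObj
  | lam : LTy → LObj → LObj
end

inductive LKind : Type where
  | type : LKind
  | pi : LTy → LKind → LKind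

mutual
def liftTy (d : Nat) : LTy → LTy
  | .const a => .const a
  | .pi A B => .pi (liftTy d A) (liftTy (d+1) B)
  | .app A M => .app (liftTy d A) (liftObj d M)
def liftObj (d : Nat) : LObj → LObj
  | .const c => .const c
  | .var k => if k < d then .var k else .var (k+1)
  | .mvar X => .mvar X
  | .app M N => .app (liftObj d M) (liftObj d N)
  | .lam A M => .lam (liftTy d A) (liftObj (d+1) M)
end

def liftKind (d : Nat) : LKind → LKind
  | .type => .type
  | .pi A K => .pi (liftTy d A) (liftKind (d+1) K)

/- Capture-avoiding substitution of an object for de Bruijn variable d. -/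
mutual
def substTy (d : Nat) (s : LObj) : LTy → LTy
  | .const a => .const a
  | .pi A B => .pi (substTy d s A) (substTy (d+1) (liftObj 0 s) B)
  | .app A M => .app (substTy d s A) (substObj d s M)
def substObj (d : Nat) (s : LObj) : LObj → LObj
  | .const c => .const c
  | .var k => if k = d then s else if d < k then .var (k-1) else .var k
  | .mvar X => .mvar X
  | .app M N => .app (substObj d s M) (substObj d s N)
  | .lam A M => .lam (substTy d s A) (substObj (d+1) (liftObj 0 s) M)
end

def substKind (d : Nat) (s : LObj) : LKind → LKind
  | .type => .type
  | .pi A K => .pi (substTy d s A) (substKind (d+1) (liftObj 0 s) K)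

/- Context lookup with the appropriate lifting. -/
inductive Lk : List LTy → Nat → LTy → Prop where
  | zero : Lk (A :: Γ) 0 (liftTy 0 A)
  | succ : Lk Γ k A → Lk (B :: Γ) (k+1) (liftTy 0 A)

/- LF typing judgments, relative to a signature (ts for kinds of type constants,
   os for types of object constants) and a meta-variable context Δ. -/
mutual
inductive WfKind (ts : Nat → LKind) (os : Nat → LTy) (Δ : Nat → LTy) :
    List LTy → LKind → Prop where
  | type : WfKind ts os Δ Γ .type
  | pi : HasKind ts os Δ Γ A .type → WfKind ts os Δ (A :: Γ) K →
      WfKind ts os Δ Γ (.pi A K)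
inductive HasKind (ts : Nat → LKind) (os : Nat → LTy) (Δ : Nat → LTy) :
    List LTy → LTy → LKind → Prop where
  | const : HasKind ts os Δ Γ (.const a) (ts a)
  | pi : HasKind ts os Δ Γ A .type → HasKind ts os Δ (A :: Γ) B .type →
      HasKind ts os Δ Γ (.pi A B) .type
  | app : HasKind ts os Δ Γ A (.pi B K) → HasTy ts os Δ Γ M B →
      HasKind ts os Δ Γ (.app A M) (substKind 0 M K)
inductive HasTy (ts : Nat → LKind) (os : Nat → LTy) (Δ : Nat → LTy) :
    List LTy → LObj → LTy → Prop where
  | const : HasTy ts os Δ Γ (.const c) (os c)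
  | var : Lk Γ k A → HasTy ts os Δ Γ (.var k) A
  | mvar : HasTy ts os Δ Γ (.mvar X) (Δ X)
  | lam : HasKind ts os Δ Γ A .type → HasTy ts os Δ (A :: Γ) M B →
      HasTy ts os Δ Γ (.lam A M) (.pi A B)
  | app : HasTy ts os Δ Γ M (.pi A B) → HasTy ts os Δ Γ N A →
      HasTy ts os Δ Γ (.app M N) (substTy 0 N B)
end
/- Simple types with the two atomic types lf-obj and lf-type. -/
inductive STy : Type where
  | lfObj : STy
  | lfType : STy
  | arr : STy → STy → STy

/- The flattening map φ on LF types (base types go to lf-obj). -/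
def phiTy : LTy → STy
  | .const _ => .lfObj
  | .app _ _ => .lfObj
  | .pi A B => .arr (phiTy A) (phiTy B)

/- The flattening map φ on LF kinds. -/
def phiKind : LKind → STy
  | .type => .lfType
  | .pi A K => .arr (phiTy A) (phiKind K)

/- Simply typed λ-terms (hohh terms), with meta-variables. -/
inductive Tm : Type where
  | const : Nat → Tm
  | var : Nat → Tm
  | mvar : Nat → Tm
  | app : Tm → Tm → Tm
  | lam : STy → Tm → Tm

def liftTm (d : Nat) : Tm → Tm
  | .const c => .const c
  | .var k => if k < d then .var k else .var (k+1)
  | .mvar X => .mvar X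
  | .app m n => .app (liftTm d m) (liftTm d n)
  | .lam τ m => .lam τ (liftTm (d+1) m)

def substTm (d : Nat) (s : Tm) : Tm → Tm
  | .const c => .const c
  | .var k => if k = d then s else if d < k then .var (k-1) else .var k
  | .mvar X => .mvar X
  | .app m n => .app (substTm d s m) (substTm d s n)
  | .lam τ m => .lam τ (substTm (d+1) (liftTm 0 s) m)

/- The lossy encoding ⟨·⟩ of LF objects as simply typed terms. -/
def enc : LObj → Tm
  | .const c => .const c
  | .var k => .var k
  | .mvar X => .mvar X
  | .app M N => .app (enc M) (enc N)
  | .lam A M => .lam (phiTy A) (enc M)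

/- STLC typing, relative to a signature cs and meta-variable typing ms. -/
inductive SHas (cs : Nat → STy) (ms : Nat → STy) : List STy → Tm → STy → Prop where
  | const : SHas cs ms Γ (.const c) (cs c)
  | var : Γ[k]? = some τ → SHas cs ms Γ (.var k) τ
  | mvar : SHas cs ms Γ (.mvar X) (ms X)
  | app : SHas cs ms Γ m (.arr τ σ) → SHas cs ms Γ n τ → SHas cs ms Γ (.app m n) σ
  | lam : SHas cs ms (τ :: Γ) m σ → SHas cs ms Γ (.lam τ m) (.arr τ σ)

/-! φ forgets every object occurring inside a type, so it is invariant under lifting and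
substitution. Hence the dependent rules of LF (variable lookup with lifting, application with
substitution into the codomain) flatten to the simply typed ones, and the encoding follows the
LF derivation rule by rule. -/

@[simp]
theorem phiTy_liftTy : ∀ (d : Nat) (A : LTy), phiTy (liftTy d A) = phiTy A
  | _, .const _ => rfl
  | _, .app _ _ => rfl
  | d, .pi A B => by simp only [liftTy, phiTy, phiTy_liftTy d A, phiTy_liftTy (d + 1) B]

@[simp]
theorem phiTy_substTy : ∀ (d : Nat) (s : LObj) (A : LTy), phiTy (substTy d s A) = phiTy A
  | _, _, .const _ => rfl
  | _, _, .app _ _ => rfl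
  | d, s, .pi A B => by
    simp only [substTy, phiTy, phiTy_substTy d s A, phiTy_substTy (d + 1) (liftObj 0 s) B]

theorem Lk.getElem?_map_phiTy {Γ : List LTy} {k : Nat} {A : LTy} (h : Lk Γ k A) :
    (Γ.map phiTy)[k]? = some (phiTy A) := by
  induction h with
  | zero => simp
  | succ _ ih => simpa using ih

/-- If Γ ⊢_Σ M : A in LF, then the encoding ⟨M⟩ is well-typed in STLC with type
    φ(A), in the signature/context obtained by flattening all declared types
    via φ. -/
theorem encoding_preserves_typing
    (ts : Nat → LKind) (os Δ : Nat → LTy) (Γ : List LTy) (M : LObj) (A : LTy)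
    (h : HasTy ts os Δ Γ M A) :
    SHas (fun c => phiTy (os c)) (fun X => phiTy (Δ X))
      (Γ.map phiTy) (enc M) (phiTy A) :=
  match h with
  | .const => .const
  | .var hk => .var hk.getElem?_map_phiTy
  | .mvar => .mvar
  | .lam _ hM => .lam (encoding_preserves_typing ts os Δ _ _ _ hM)
  | .app hM hN => by
    rw [phiTy_substTy]
    exact .app (encoding_preserves_typing ts os Δ _ _ _ hM)
      (encoding_preserves_typing ts os Δ _ _ _ hN)
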